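/- Splitting for fresh-head clauses: Let P be a propositional normal logic program and let D be a set of clauses whose heads are atoms not occurring in P and not occurring in any body of a clause in D (heads of D occur only as heads in D). Then M is a stable model of P ∪ D if and only if M = N ∪ H where N is a stable model of P and H = { head(C) : C ∈ D, pos(C) ⊆ N, neg(C) ∩ N = ∅ }. -/
import Mathlib


structure Clause (α : Type) where
  head : α
  pos : Finset α
  neg : Finset α
deriving DecidableEq

/-- The Gelfond–Lifschitz reduct of program `P` with respect to `M`. -/
def reduct {α : Type} (P : Finset (Clause α)) (M : Set α) : Set (Clause α) :=
  {C | ∃ D ∈ P, (∀ r ∈ D.neg, r ∉ M) ∧ C = ⟨D.head, D.pos, ∅⟩}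

/-- `X` is closed under the rules of the definite program `Q`. -/
def DefClosed {α : Type} (Q : Set (Clause α)) (X : Set α) : Prop :=
  ∀ C ∈ Q, (∀ q ∈ C.pos, q ∈ X) → C.head ∈ X

/-- Least model of a definite program: least set of atoms closed under its rules. -/
def LM {α : Type} (Q : Set (Clause α)) : Set α :=
  ⋂₀ {X | DefClosed Q X}

/-- `M` is a stable model of `P`. -/
def IsStable {α : Type} (P : Finset (Clause α)) (M : Set α) : Prop :=
  M = LM (reduct P M)

lemma LM_closed {α : Type} (Q : Set (Clause α)) : DefClosed Q (LM Q) := by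
  intro C hC hpos X hX
  exact hX C hC fun q hq => hpos q hq X hX

lemma LM_le {α : Type} (Q : Set (Clause α)) {X : Set α} (hX : DefClosed Q X) :
    LM Q ⊆ X :=
  Set.sInter_subset_of_mem hX

lemma LM_union {α : Type} (Q R : Set (Clause α))
    (h1 : ∀ C ∈ Q, ∀ C' ∈ R, C'.head ∉ C.pos)
    (h2 : ∀ C ∈ R, ∀ C' ∈ R, C'.head ∉ C.pos) :
    LM (Q ∪ R) = LM Q ∪ {a | ∃ C ∈ R, (∀ q ∈ C.pos, q ∈ LM Q) ∧ C.head = a} := by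
  apply subset_antisymm
  · apply LM_le
    intro C hC hpos
    rcases hC with hC | hC
    · left
      apply LM_closed Q C hC
      intro q hq
      rcases hpos q hq with h | ⟨C', hC', _, rfl⟩
      · exact h
      · exact absurd hq (h1 C hC C' hC')
    · right
      refine ⟨C, hC, ?_, rfl⟩
      intro q hq
      rcases hpos q hq with h | ⟨C', hC', _, rfl⟩
      · exact h
      · exact absurd hq (h2 C hC C' hC')
  · intro a ha X hX
    have hQ : DefClosed Q X := fun C hC => hX C (Or.inl hC)
    rcases ha with ha | ⟨C, hC, hp, rfl⟩
    · exact ha X hQ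
    · exact hX C (Or.inr hC) fun q hq => hp q hq X hQ

lemma reduct_eq {α : Type} (P : Finset (Clause α)) (M N : Set α)
    (h : ∀ C ∈ P, ∀ r ∈ C.neg, (r ∈ M ↔ r ∈ N)) : reduct P M = reduct P N := by
  ext C
  constructor
  · rintro ⟨E, hE, hn, rfl⟩
    exact ⟨E, hE, fun r hr hrN => hn r hr ((h E hE r hr).mpr hrN), rfl⟩
  · rintro ⟨E, hE, hn, rfl⟩
    exact ⟨E, hE, fun r hr hrM => hn r hr ((h E hE r hr).mp hrM), rfl⟩

lemma reduct_union {α : Type} [DecidableEq α] (P D : Finset (Clause α)) (M : Set α) :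
    reduct (P ∪ D) M = reduct P M ∪ reduct D M := by
  ext C
  simp only [reduct, Set.mem_setOf_eq, Set.mem_union, Finset.mem_union]
  constructor
  · rintro ⟨E, (h | h), hn, rfl⟩
    · exact Or.inl ⟨E, h, hn, rfl⟩
    · exact Or.inr ⟨E, h, hn, rfl⟩
  · rintro (⟨E, h, hn, rfl⟩ | ⟨E, h, hn, rfl⟩)
    · exact ⟨E, Or.inl h, hn, rfl⟩
    · exact ⟨E, Or.inr h, hn, rfl⟩

/-- Splitting for fresh-head clauses: if the heads of the clauses in `D` occur
neither in `P` nor in any body of a clause of `D`, then the stable models of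
`P ∪ D` are exactly the sets `N ∪ H` where `N` is a stable model of `P` and
`H` is the set of heads of clauses of `D` whose bodies are satisfied by `N`. -/
theorem splitting_fresh_heads {α : Type} [DecidableEq α]
    (P D : Finset (Clause α))
    (hP : ∀ C ∈ D, ∀ C' ∈ P, C.head ≠ C'.head ∧ C.head ∉ C'.pos ∧ C.head ∉ C'.neg)
    (hD : ∀ C ∈ D, ∀ C' ∈ D, C.head ∉ C'.pos ∧ C.head ∉ C'.neg)
    (M : Set α) :
    IsStable (P ∪ D) M ↔
      ∃ N : Set α, IsStable P N ∧
        M = N ∪ {p | ∃ C ∈ D, C.head = p ∧ (∀ q ∈ C.pos, q ∈ N) ∧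
          ∀ r ∈ C.neg, r ∉ N} := by
  have h1 : ∀ M : Set α, ∀ C ∈ reduct P M, ∀ C' ∈ reduct D M, C'.head ∉ C.pos := by
    rintro M C ⟨Cp, hCp, _, rfl⟩ C' ⟨Cd, hCd, _, rfl⟩
    exact (hP Cd hCd Cp hCp).2.1
  have h2 : ∀ M : Set α, ∀ C ∈ reduct D M, ∀ C' ∈ reduct D M, C'.head ∉ C.pos := by
    rintro M C ⟨Cp, hCp, _, rfl⟩ C' ⟨Cd, hCd, _, rfl⟩
    exact (hD Cd hCd Cp hCp).1
  have hLMu : ∀ M : Set α, LM (reduct (P ∪ D) M) =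
      LM (reduct P M) ∪
        {a | ∃ C ∈ reduct D M, (∀ q ∈ C.pos, q ∈ LM (reduct P M)) ∧ C.head = a} := by
    intro M
    rw [reduct_union, LM_union _ _ (h1 M) (h2 M)]
  have hshared : ∀ M N : Set α,
      (∀ r, (∀ Cd ∈ D, Cd.head ≠ r) → (r ∈ M ↔ r ∈ N)) →
      N = LM (reduct P M) →
      reduct P M = reduct P N ∧
      LM (reduct (P ∪ D) M) = N ∪ {p | ∃ C ∈ D, C.head = p ∧ (∀ q ∈ C.pos, q ∈ N) ∧
          ∀ r ∈ C.neg, r ∉ N} := by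
    intro M N hyp hNdef
    have hrP : reduct P M = reduct P N :=
      reduct_eq _ _ _ fun C hC r hr =>
        hyp r fun Cd hCd he => (hP Cd hCd C hC).2.2 (he ▸ hr)
    refine ⟨hrP, ?_⟩
    rw [hLMu M, ← hNdef]
    congr 1
    ext a
    simp only [Set.mem_setOf_eq]
    constructor
    · rintro ⟨C, ⟨Cd, hCd, hn, rfl⟩, hp, hhead⟩
      exact ⟨Cd, hCd, hhead, hp, fun r hr hrN =>
        hn r hr ((hyp r fun C' hC' he => (hD C' hC' Cd hCd).2 (he ▸ hr)).mpr hrN)⟩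
    · rintro ⟨Cd, hCd, hhead, hp, hn⟩
      exact ⟨⟨Cd.head, Cd.pos, ∅⟩, ⟨Cd, hCd, fun r hr hrM =>
        hn r hr ((hyp r fun C' hC' he => (hD C' hC' Cd hCd).2 (he ▸ hr)).mp hrM), rfl⟩,
        hp, hhead⟩
  constructor
  · intro hM
    have hM' : M = LM (reduct (P ∪ D) M) := hM
    have key : M = LM (reduct P M) ∪
        {a | ∃ C ∈ reduct D M, (∀ q ∈ C.pos, q ∈ LM (reduct P M)) ∧ C.head = a} :=
      hM'.trans (hLMu M)
    have hyp : ∀ r, (∀ Cd ∈ D, Cd.head ≠ r) → (r ∈ M ↔ r ∈ LM (reduct P M)) := by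
      intro r hr
      constructor
      · intro h
        rw [key] at h
        rcases h with h | ⟨C, ⟨Cd, hCd, _, rfl⟩, _, hhead⟩
        · exact h
        · exact absurd hhead (hr Cd hCd)
      · intro h
        rw [key]
        exact Or.inl h
    obtain ⟨hrP, hLMeq⟩ := hshared M (LM (reduct P M)) hyp rfl
    refine ⟨LM (reduct P M), ?_, hM'.trans hLMeq⟩
    show LM (reduct P M) = LM (reduct P (LM (reduct P M)))
    rw [← hrP]
  · rintro ⟨N, hNs, rfl⟩
    have hNs' : N = LM (reduct P N) := hNs
    have hyp : ∀ r, (∀ Cd ∈ D, Cd.head ≠ r) →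
        (r ∈ N ∪ {p | ∃ C ∈ D, C.head = p ∧ (∀ q ∈ C.pos, q ∈ N) ∧
          ∀ r ∈ C.neg, r ∉ N} ↔ r ∈ N) := by
      intro r hr
      simp only [Set.mem_union, Set.mem_setOf_eq]
      constructor
      · rintro (h | ⟨Cd, hCd, hhead, -⟩)
        · exact h
        · exact absurd hhead (hr Cd hCd)
      · exact Or.inl
    have hrP : reduct P (N ∪ {p | ∃ C ∈ D, C.head = p ∧ (∀ q ∈ C.pos, q ∈ N) ∧
          ∀ r ∈ C.neg, r ∉ N}) = reduct P N :=
      reduct_eq _ _ _ fun C hC r hr =>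
        hyp r fun Cd hCd he => (hP Cd hCd C hC).2.2 (he ▸ hr)
    have hNdef : N = LM (reduct P (N ∪ {p | ∃ C ∈ D, C.head = p ∧ (∀ q ∈ C.pos, q ∈ N) ∧
          ∀ r ∈ C.neg, r ∉ N})) := by
      rw [hrP]; exact hNs'
    obtain ⟨-, hLMeq⟩ := hshared _ N hyp hNdef
    exact hLMeq.symm
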